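/- arXiv:1610.05618 — 2 statements merged into one kernel-verified Lean document; each statement's English description precedes it below -/
import Mathlib

section
/- With notation as in the gauge transformation of the nonholonomic bracket: if Π♯ is the block matrix [[0, ρ],[-ρᵀ, -C]] and Ξ♭ is the block matrix [[ρ̄ᵀ B ρ̄, 0],[0,0]], where ρ̄ρ = I and B, C are skew-symmetric r×r matrices, then (Id + Π♯ Ξ♭)⁻¹ Π♯ = [[0, ρ],[-ρᵀ, B - C]]. In particular the gauge-transformed bivector differs from the original only in the lower-right block, replaced by B - C. -/
open Matrix

/-- Gauge transformation of the nonholonomic bracket in matrix form: with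
`Π♯ = [[0, ρ], [-ρᵀ, -C]]` and `Ξ♭ = [[ρ̄ᵀ B ρ̄, 0], [0, 0]]`, where `ρ̄ρ = I`
and `B`, `C` are skew-symmetric, one has
`(Id + Π♯ Ξ♭)⁻¹ Π♯ = [[0, ρ], [-ρᵀ, B - C]]`. -/
theorem stmt8 {n r : ℕ} (ρ : Matrix (Fin n) (Fin r) ℝ)
    (ρb : Matrix (Fin r) (Fin n) ℝ) (hρ : ρb * ρ = 1)
    (B C : Matrix (Fin r) (Fin r) ℝ) (hB : Bᵀ = -B) (hC : Cᵀ = -C) :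
    (1 + fromBlocks 0 ρ (-ρᵀ) (-C) * fromBlocks (ρbᵀ * B * ρb) 0 0 0)⁻¹ *
        fromBlocks 0 ρ (-ρᵀ) (-C)
      = fromBlocks 0 ρ (-ρᵀ) (B - C) := by
  have hpt : ρᵀ * ρbᵀ = 1 := by
    rw [← transpose_mul, hρ, transpose_one]
  have hM : 1 + fromBlocks 0 ρ (-ρᵀ) (-C) * fromBlocks (ρbᵀ * B * ρb) 0 0 0
      = fromBlocks 1 0 (-(B * ρb)) 1 := by
    rw [fromBlocks_multiply,
      show (1 : Matrix (Fin n ⊕ Fin r) (Fin n ⊕ Fin r) ℝ) = fromBlocks 1 0 0 1 from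
        fromBlocks_one.symm, fromBlocks_add]
    simp [Matrix.mul_assoc, ← Matrix.mul_assoc ρᵀ, hpt]
  have hinv : (fromBlocks (1 : Matrix (Fin n) (Fin n) ℝ) 0 (-(B * ρb)) 1) *
      fromBlocks (1 : Matrix (Fin n) (Fin n) ℝ) 0 (B * ρb) (1 : Matrix (Fin r) (Fin r) ℝ) = 1 := by
    rw [fromBlocks_multiply, ← fromBlocks_one]
    simp
  rw [hM, Matrix.inv_eq_right_inv hinv, fromBlocks_multiply]
  simp [Matrix.mul_assoc, hρ, sub_eq_add_neg, add_comm]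
end

section
/- Let Z be a section of the constraint distribution D of a nonholonomic mechanical system with Lagrangian L = ½G(u,u) − V. If Z^{TQ}[L] = 0 on D (where Z^{TQ} is the tangent lift), then Z[V] = 0 and (£_Z G)(u,u) = 0 for all u ∈ D. Conversely, if Z[V] = 0 and (£_Z G)(u,u) = 0 for u ∈ D, then Z^{TQ}[L] = 0 on D. -/
/-! Along the tangent lift `(Z q, DZ(q)·u)` the Lagrangian `L = ½ G(u,u) − V` has derivative
`½ (£_Z G)(u,u) − Z[V]`: differentiating `G_{ij}` gives the first term of the Lie derivative, and
the terms `G(DZ·u, u)` and `G(u, DZ·u)` become its other two terms after relabelling indices.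
Since `0` lies in every fibre of `D` and the kinetic term vanishes there, `Z^{TQ}[L] = 0` on `D`
forces `Z[V] = 0`, and then `(£_Z G)(u,u) = 0` on `D`; the converse is read off the identity. -/

open scoped BigOperators

/-- The tangent lift `Z^{TQ}` of a vector field `Z` on `Q = ℝⁿ`, applied to a
function `F` on `TQ = ℝⁿ × ℝⁿ`:
`Z^{TQ}[F](q,u) = dF(q,u)·(Z(q), DZ(q)·u)`. -/
noncomputable def tangentLift {n : ℕ} (Z : (Fin n → ℝ) → (Fin n → ℝ))
    (F : (Fin n → ℝ) × (Fin n → ℝ) → ℝ) (q u : Fin n → ℝ) : ℝ :=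
  fderiv ℝ F (q, u) (Z q, fderiv ℝ Z q u)

/-- The Lie derivative of the metric `G` along `Z`, evaluated on `(u,u)`:
`(£_Z G)(u,u) = Σ_{ij} (Z^k ∂_k G_{ij} + G_{kj} ∂_i Z^k + G_{ik} ∂_j Z^k) uⁱ uʲ`. -/
noncomputable def lieDerivMetric {n : ℕ}
    (G : (Fin n → ℝ) → Matrix (Fin n) (Fin n) ℝ)
    (Z : (Fin n → ℝ) → (Fin n → ℝ)) (q u : Fin n → ℝ) : ℝ :=
  ∑ i, ∑ j,
    (fderiv ℝ (fun p => G p i j) q (Z q)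
      + (∑ k, G q k j * fderiv ℝ (fun p => Z p k) q (Pi.single i 1))
      + (∑ k, G q i k * fderiv ℝ (fun p => Z p k) q (Pi.single j 1)))
    * u i * u j

section

variable {ι E : Type*} [Fintype ι] [NormedAddCommGroup E] [NormedSpace ℝ E]

theorem fderiv_sum_sum_mul_mul_apply {G : E → Matrix ι ι ℝ} {q : E}
    (hG : ∀ i j, DifferentiableAt ℝ (fun p => G p i j) q) (u : ι → ℝ) (a : E) (b : ι → ℝ) :
    fderiv ℝ (fun p : E × (ι → ℝ) => ∑ i, ∑ j, G p.1 i j * p.2 i * p.2 j) (q, u) (a, b)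
      = ∑ i, ∑ j, (fderiv ℝ (fun p => G p i j) q a * u i * u j
          + G q i j * b i * u j + G q i j * u i * b j) := by
  have dG : ∀ i j, fderiv ℝ (fun p : E × (ι → ℝ) => G p.1 i j) (q, u) (a, b)
      = fderiv ℝ (fun p => G p i j) q a := fun i j => by
    have h := (hG i j).hasFDerivAt.comp (q, u) (hasFDerivAt_fst (𝕜 := ℝ) (p := (q, u)))
    exact DFunLike.congr_fun h.fderiv (a, b)
  have du : ∀ i, fderiv ℝ (fun p : E × (ι → ℝ) => p.2 i) (q, u) (a, b) = b i := fun i => by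
    rw [fderiv_apply differentiableAt_snd]; simp [fderiv_snd]
  rw [fderiv_fun_sum fun i _ => by fun_prop]
  simp only [FunLike.coe_sum, Finset.sum_apply]
  refine Finset.sum_congr rfl fun i _ => ?_
  rw [fderiv_fun_sum fun j _ => by fun_prop]
  simp only [FunLike.coe_sum, Finset.sum_apply]
  refine Finset.sum_congr rfl fun j _ => ?_
  rw [fderiv_fun_mul (by fun_prop) (by fun_prop), fderiv_fun_mul (by fun_prop) (by fun_prop)]
  simp only [add_apply, smul_apply, smul_eq_mul, dG, du]
  ring

end

section

variable {ι : Type*} [Fintype ι]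

theorem sum_sum_mul_mulVec_mul (G J : Matrix ι ι ℝ) (u : ι → ℝ) :
    ∑ i, ∑ j, G i j * (∑ k, J i k * u k) * u j
      = ∑ i, ∑ j, (∑ k, G k j * J k i) * u i * u j := by
  simp only [Finset.mul_sum, Finset.sum_mul]
  conv_lhs => rw [Finset.sum_comm]; enter [2, j]; rw [Finset.sum_comm]
  conv_lhs => rw [Finset.sum_comm]
  exact Finset.sum_congr rfl fun i _ => Finset.sum_congr rfl fun j _ =>
    Finset.sum_congr rfl fun k _ => by ring

theorem sum_sum_mul_mul_mulVec (G J : Matrix ι ι ℝ) (u : ι → ℝ) :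
    ∑ i, ∑ j, G i j * u i * (∑ k, J j k * u k)
      = ∑ i, ∑ j, (∑ k, G i k * J k j) * u i * u j := by
  simp only [Finset.mul_sum, Finset.sum_mul]
  refine Finset.sum_congr rfl fun i _ => ?_
  rw [Finset.sum_comm]
  exact Finset.sum_congr rfl fun j _ => Finset.sum_congr rfl fun k _ => by ring

variable [DecidableEq ι]

theorem fderiv_apply_apply_eq_sum {κ : Type*} {Z : (ι → ℝ) → κ → ℝ} {q : ι → ℝ}
    (hZ : DifferentiableAt ℝ Z q) (u : ι → ℝ) (k : κ) :
    fderiv ℝ Z q u k = ∑ i, fderiv ℝ (fun p => Z p k) q (Pi.single i 1) * u i := by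
  conv_lhs => rw [pi_eq_sum_univ' u]
  simp [fderiv_apply hZ k, mul_comm]

end

theorem tangentLift_lagrangian {n : ℕ} {G : (Fin n → ℝ) → Matrix (Fin n) (Fin n) ℝ}
    {V : (Fin n → ℝ) → ℝ} {Z : (Fin n → ℝ) → (Fin n → ℝ)} {q : Fin n → ℝ}
    (hG : ∀ i j, DifferentiableAt ℝ (fun p => G p i j) q) (hV : DifferentiableAt ℝ V q)
    (hZ : DifferentiableAt ℝ Z q) (u : Fin n → ℝ) :
    tangentLift Z (fun p => (1 / 2) * (∑ i, ∑ j, G p.1 i j * p.2 i * p.2 j) - V p.1) q u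
      = (1 / 2) * lieDerivMetric G Z q u - fderiv ℝ V q (Z q) := by
  have dV : fderiv ℝ (fun p : (Fin n → ℝ) × (Fin n → ℝ) => V p.1) (q, u) (Z q, fderiv ℝ Z q u)
      = fderiv ℝ V q (Z q) := by
    have h := hV.hasFDerivAt.comp (q, u) (hasFDerivAt_fst (𝕜 := ℝ) (p := (q, u)))
    exact DFunLike.congr_fun h.fderiv _
  unfold tangentLift lieDerivMetric
  rw [fderiv_fun_sub (by fun_prop) (by fun_prop), fderiv_const_mul (by fun_prop)]
  simp only [sub_apply, smul_apply, smul_eq_mul, dV, fderiv_sum_sum_mul_mul_apply hG,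
    fderiv_apply_apply_eq_sum hZ, add_mul, Finset.sum_add_distrib]
  rw [sum_sum_mul_mulVec_mul (G q) fun k i => fderiv ℝ (fun p => Z p k) q (Pi.single i 1),
    sum_sum_mul_mul_mulVec (G q) fun k i => fderiv ℝ (fun p => Z p k) q (Pi.single i 1)]

theorem lieDerivMetric_zero {n : ℕ} (G : (Fin n → ℝ) → Matrix (Fin n) (Fin n) ℝ)
    (Z : (Fin n → ℝ) → (Fin n → ℝ)) (q : Fin n → ℝ) : lieDerivMetric G Z q 0 = 0 := by
  simp [lieDerivMetric]

theorem stmt16_general {n : ℕ} (G : (Fin n → ℝ) → Matrix (Fin n) (Fin n) ℝ)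
    (V : (Fin n → ℝ) → ℝ) (Z : (Fin n → ℝ) → (Fin n → ℝ))
    (D : (Fin n → ℝ) → Submodule ℝ (Fin n → ℝ))
    (hG : ∀ i j, Differentiable ℝ fun q => G q i j)
    (hV : Differentiable ℝ V) (hZ : Differentiable ℝ Z) :
    (∀ q u, u ∈ D q →
        tangentLift Z
          (fun p => (1 / 2) * (∑ i, ∑ j, G p.1 i j * p.2 i * p.2 j) - V p.1)
          q u = 0)
      ↔ ((∀ q, fderiv ℝ V q (Z q) = 0)
          ∧ (∀ q u, u ∈ D q → lieDerivMetric G Z q u = 0)) := by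
  simp only [tangentLift_lagrangian (fun i j => hG i j _) (hV _) (hZ _)]
  constructor
  · intro h
    have hZV : ∀ q, fderiv ℝ V q (Z q) = 0 := fun q => by
      simpa [lieDerivMetric_zero] using h q 0 (D q).zero_mem
    exact ⟨hZV, fun q u hu => by linarith [h q u hu, hZV q]⟩
  · rintro ⟨hZV, hLG⟩ q u hu
    rw [hZV q, hLG q u hu]
    norm_num

/-- Let `Z` be a section of the constraint distribution `D` of a nonholonomic
mechanical system with Lagrangian `L = ½ G(u,u) − V`.  Then `Z^{TQ}[L] = 0` on
`D` if and only if `Z[V] = 0` and `(£_Z G)(u,u) = 0` for all `u ∈ D`. -/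
theorem stmt16 {n : ℕ} (G : (Fin n → ℝ) → Matrix (Fin n) (Fin n) ℝ)
    (V : (Fin n → ℝ) → ℝ) (Z : (Fin n → ℝ) → (Fin n → ℝ))
    (D : (Fin n → ℝ) → Submodule ℝ (Fin n → ℝ))
    (hG : ∀ i j, Differentiable ℝ fun q => G q i j)
    (hsym : ∀ q i j, G q i j = G q j i)
    (hV : Differentiable ℝ V) (hZ : Differentiable ℝ Z)
    (hZD : ∀ q, Z q ∈ D q) :
    (∀ q u, u ∈ D q →
        tangentLift Z
          (fun p => (1 / 2) * (∑ i, ∑ j, G p.1 i j * p.2 i * p.2 j) - V p.1)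
          q u = 0)
      ↔ ((∀ q, fderiv ℝ V q (Z q) = 0)
          ∧ (∀ q u, u ∈ D q → lieDerivMetric G Z q u = 0)) :=
  stmt16_general G V Z D hG hV hZ
end
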